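/- arXiv:2407.03982 — 2 statements merged into one kernel-verified Lean document; each statement's English description precedes it below -/
import Mathlib

section
/- Define f : ℝ² → ℝ by f(δ₁, δ₂) = 1 − exp(−2(ln δ₁)²) − exp(−2(ln δ₂)²) + 2·exp(−2((ln δ₁)² + (ln δ₂)²)). Then the second partial derivative of f with respect to δ₁, evaluated at the point (δ₁, δ₂) = (3/10, 1/2), is strictly negative. -/
theorem stmt_12 (f : ℝ → ℝ → ℝ)
    (hf : ∀ δ₁ δ₂ : ℝ, f δ₁ δ₂ =
      1 - Real.exp (-2 * (Real.log δ₁) ^ 2) - Real.exp (-2 * (Real.log δ₂) ^ 2)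
        + 2 * Real.exp (-2 * ((Real.log δ₁) ^ 2 + (Real.log δ₂) ^ 2))) :
    deriv (deriv (fun δ₁ : ℝ => f δ₁ (1 / 2))) (3 / 10) < 0 := by
  set L2 : ℝ := Real.log (1/2) with hL2
  set K : ℝ := 1 - Real.exp (-2 * L2 ^ 2) with hK
  set B : ℝ := 2 * Real.exp (-2 * L2 ^ 2) - 1 with hB
  have hFeq : (fun x : ℝ => f x (1/2)) =
      fun x => K + B * Real.exp (-2 * (Real.log x) ^ 2) := by
    funext x
    rw [hf]
    have h : (-2 : ℝ) * ((Real.log x) ^ 2 + L2 ^ 2)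
        = (-2 * (Real.log x) ^ 2) + (-2 * L2 ^ 2) := by ring
    rw [h, Real.exp_add, hK, hB]
    ring
  -- derivative of inner exp
  have hexp : ∀ x : ℝ, x ≠ 0 →
      HasDerivAt (fun x : ℝ => Real.exp (-2 * (Real.log x) ^ 2))
        (Real.exp (-2 * (Real.log x) ^ 2) * (-4 * Real.log x / x)) x := by
    intro x hx
    have h1 : HasDerivAt Real.log x⁻¹ x := Real.hasDerivAt_log hx
    have h2 := (h1.pow 2).const_mul (-2 : ℝ)
    have h3 := h2.exp
    convert h3 using 1
    · rfl
    simp only [Pi.pow_apply]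
    rw [div_eq_mul_inv]
    push_cast
    ring
  have hF : ∀ x : ℝ, x ≠ 0 →
      HasDerivAt (fun x : ℝ => f x (1/2))
        (B * (Real.exp (-2 * (Real.log x) ^ 2) * (-4 * Real.log x / x))) x := by
    intro x hx
    rw [hFeq]
    exact ((hexp x hx).const_mul B).const_add K
  set G : ℝ → ℝ := fun x => B * (Real.exp (-2 * (Real.log x) ^ 2) * (-4 * Real.log x / x))
    with hG
  have hev : deriv (fun x : ℝ => f x (1/2)) =ᶠ[nhds (3/10 : ℝ)] G := by
    filter_upwards [eventually_ne_nhds (show (3/10 : ℝ) ≠ 0 by norm_num)] with x hx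
    exact (hF x hx).deriv
  rw [hev.deriv_eq]
  -- derivative of G at 3/10
  have hx : (3/10 : ℝ) ≠ 0 := by norm_num
  set L : ℝ := Real.log (3/10) with hL
  set E : ℝ := Real.exp (-2 * L ^ 2) with hE
  have h1 : HasDerivAt Real.log (3/10 : ℝ)⁻¹ (3/10 : ℝ) := Real.hasDerivAt_log hx
  have hnum : HasDerivAt (fun x : ℝ => -4 * Real.log x) (-4 * (3/10 : ℝ)⁻¹) (3/10 : ℝ) :=
    h1.const_mul (-4)
  have hden : HasDerivAt (fun x : ℝ => x) 1 (3/10 : ℝ) := hasDerivAt_id _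
  have hv := hnum.div hden hx
  have hGd := ((hexp (3/10) hx).mul hv).const_mul B
  have hde := hGd.deriv
  rw [show deriv G (3/10) = _ from hde]
  -- numeric bounds
  have hEpos : 0 < E := Real.exp_pos _
  have hLlt : L < -1 := by
    rw [hL]
    have h30 : (3/10 : ℝ) < Real.exp (-1) := by
      rw [Real.exp_neg]
      rw [lt_inv_comm₀ (by norm_num) (Real.exp_pos 1)]
      calc Real.exp 1 < 2.7182818286 := Real.exp_one_lt_d9
        _ < (3/10 : ℝ)⁻¹ := by norm_num
    calc Real.log (3/10) < Real.log (Real.exp (-1)) :=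
          Real.log_lt_log (by norm_num) h30
      _ = -1 := Real.log_exp _
  have hBneg : B < 0 := by
    rw [hB, hL2]
    have hlog : L2 ^ 2 = (Real.log 2) ^ 2 := by
      rw [hL2, one_div, Real.log_inv]; ring
    have hl2 : (1/2 : ℝ) < Real.log 2 := by
      have := Real.log_two_gt_d9; linarith
    have : Real.exp (-2 * L2 ^ 2) < 1/2 := by
      have h1 : (-2 : ℝ) * L2 ^ 2 < -Real.log 2 := by
        rw [hlog]; nlinarith
      calc Real.exp (-2 * L2 ^ 2) < Real.exp (-Real.log 2) :=
            Real.exp_lt_exp.mpr h1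
        _ = 1/2 := by rw [Real.exp_neg, Real.exp_log (by norm_num)]; norm_num
    rw [← hL2]; linarith
  have hbracket : 0 < 16 * L ^ 2 + 4 * L - 4 := by nlinarith
  have hform : B * (E * (-4 * L / (3/10)) * (-4 * L / (3/10)) +
      E * ((-4 * (3/10 : ℝ)⁻¹ * (3/10) - -4 * L * 1) / (3/10 : ℝ) ^ 2))
      = B * E * (16 * L ^ 2 + 4 * L - 4) * (100/9) := by
    field_simp
    ring
  have hlhs : E * (-4 * L / (3/10)) = E * (-4 * L / (3/10)) := rfl
  -- match the exact derivative expression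
  have : B * (Real.exp (-2 * Real.log (3/10) ^ 2) * (-4 * Real.log (3/10) / (3/10)) *
        (-4 * Real.log (3/10) / (3/10)) +
      Real.exp (-2 * Real.log (3/10) ^ 2) *
        ((-4 * (3/10 : ℝ)⁻¹ * (3/10) - -4 * Real.log (3/10) * 1) / (3/10 : ℝ) ^ 2)) < 0 := by
    rw [← hL, ← hE]
    have := hform
    nlinarith [mul_pos hEpos hbracket,
      mul_neg_of_neg_of_pos hBneg (mul_pos hEpos hbracket)]
  convert this using 2
  rfl
end

section
/- Define f : ℝ² → ℝ by f(δ₁, δ₂) = 1 − exp(−2(ln δ₁)²) − exp(−2(ln δ₂)²) + 2·exp(−2((ln δ₁)² + (ln δ₂)²)). Then f is not convex on the open square (0,1) × (0,1); that is, ConvexOn fails for f on this set. -/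
private lemma auxS_stmt13 (t : ℝ) (hlb : (0.8824:ℝ) < t) (hub : t < (0.8826:ℝ)) :
    0 < 1 + t - t^3 - 4*t^4 - 4*t^5 - t^6 + 2*t^7 + 4*t^8 + 4*t^9 + 2*t^10 := by
  nlinarith [sq_nonneg t, sq_nonneg (t-0.8825), sq_nonneg (t^2-0.7788),
    sq_nonneg (t^3-0.6873), sq_nonneg (t^4 - 0.6066), sq_nonneg (t^5-0.5353),
    mul_pos (sub_pos.2 hub) (sub_pos.2 hlb)]


theorem stmt_13 (f : ℝ × ℝ → ℝ)
    (hf : ∀ p : ℝ × ℝ, f p =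
      1 - Real.exp (-2 * (Real.log p.1) ^ 2) - Real.exp (-2 * (Real.log p.2) ^ 2)
        + 2 * Real.exp (-2 * ((Real.log p.1) ^ 2 + (Real.log p.2) ^ 2))) :
    ¬ ConvexOn ℝ (Set.Ioo (0:ℝ) 1 ×ˢ Set.Ioo (0:ℝ) 1) f := by
  intro hcx
  set t := Real.exp (-(1/8:ℝ)) with htdef
  have htpos : (0:ℝ) < t := Real.exp_pos _
  have hlt1 : t < 1 := Real.exp_lt_one_iff.2 (by norm_num)
  -- numeric bounds on t = e^{-1/8}
  have h8 : t ^ 8 = Real.exp (-1) := by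
    rw [htdef, ← Real.exp_nat_mul]; norm_num
  have hlb : (0.8824:ℝ) < t := by
    by_contra h
    push_neg at h
    have h2 : t ^ 8 ≤ (0.8824:ℝ) ^ 8 := pow_le_pow_left₀ htpos.le h 8
    rw [h8, Real.exp_neg] at h2
    have h3 : Real.exp 1 < 2.7182818286 := Real.exp_one_lt_d9
    have h4 : (0:ℝ) < Real.exp 1 := Real.exp_pos _
    rw [inv_le_iff_one_le_mul₀ h4] at h2
    nlinarith
  have hub : t < (0.8826:ℝ) := by
    by_contra h
    push_neg at h
    have h2 : (0.8826:ℝ) ^ 8 ≤ t ^ 8 := pow_le_pow_left₀ (by norm_num) h 8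
    rw [h8, Real.exp_neg] at h2
    have h3 : (2.7182818283:ℝ) < Real.exp 1 := Real.exp_one_gt_d9
    have h4 : (0:ℝ) < Real.exp 1 := Real.exp_pos _
    have h5 := mul_le_mul_of_nonneg_right h2 h4.le
    rw [inv_mul_cancel₀ h4.ne'] at h5
    nlinarith
  -- logs and exps of powers of t
  have hL : ∀ j : ℕ, Real.log (t ^ j) = -((j:ℝ)/8) := by
    intro j
    rw [Real.log_pow, htdef, Real.log_exp]; ring
  have hE : ∀ k : ℕ, t ^ k = Real.exp (-((k:ℝ)/8)) := by
    intro k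
    rw [htdef, ← Real.exp_nat_mul]; congr 1; push_cast; ring
  have E64 : Real.exp (-2 * (Real.log (t^6)) ^ 2) = t ^ 9 := by
    rw [hL 6, hE 9]; congr 1; norm_num
  have E44 : Real.exp (-2 * (Real.log (t^4)) ^ 2) = t ^ 4 := by
    rw [hL 4, hE 4]; congr 1; norm_num
  have E13 : Real.exp (-2 * ((Real.log (t^6)) ^ 2 + (Real.log (t^4)) ^ 2)) = t ^ 13 := by
    rw [hL 6, hL 4, hE 13]; congr 1; norm_num
  have E2 : Real.exp (-2 * (Real.log (t^2)) ^ 2) = t ^ 1 := by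
    rw [hL 2, hE 1]; congr 1; norm_num
  have E5 : Real.exp (-2 * ((Real.log (t^2)) ^ 2 + (Real.log (t^4)) ^ 2)) = t ^ 5 := by
    rw [hL 2, hL 4, hE 5]; congr 1; norm_num
  have E8 : Real.exp (-2 * ((Real.log (t^4)) ^ 2 + (Real.log (t^4)) ^ 2)) = t ^ 8 := by
    rw [hL 4, hE 8]; congr 1; norm_num
  -- values of f at the three points
  have hfx : f (t^6, t^4) = 1 - t^9 - t^4 + 2*t^13 := by
    rw [hf (t^6, t^4)]; dsimp only; rw [E64, E44, E13]
  have hfy : f (t^2, t^4) = 1 - t^1 - t^4 + 2*t^5 := by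
    rw [hf (t^2, t^4)]; dsimp only; rw [E2, E44, E5]
  have hfm : f (t^4, t^4) = 1 - t^4 - t^4 + 2*t^8 := by
    rw [hf (t^4, t^4)]; dsimp only; rw [E44, E8]
  -- set up the convex combination
  have hden : (0:ℝ) < t^2 - t^6 :=
    sub_pos.2 (pow_lt_pow_right_of_lt_one₀ htpos hlt1 (by norm_num))
  set a : ℝ := (t^2 - t^4)/(t^2 - t^6) with hadef
  set b : ℝ := (t^4 - t^6)/(t^2 - t^6) with hbdef
  have ha : 0 ≤ a := by
    apply div_nonneg _ hden.le; nlinarith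
  have hb : 0 ≤ b := by
    apply div_nonneg _ hden.le; nlinarith
  have hab : a + b = 1 := by
    rw [hadef, hbdef, ← add_div, div_eq_one_iff_eq hden.ne']; ring
  have hmem : ∀ k : ℕ, 1 ≤ k → t ^ k ∈ Set.Ioo (0:ℝ) 1 := by
    intro k hk
    exact ⟨pow_pos htpos k, pow_lt_one₀ htpos.le hlt1 (by omega)⟩
  have hx : ((t^6 : ℝ), (t^4 : ℝ)) ∈ Set.Ioo (0:ℝ) 1 ×ˢ Set.Ioo (0:ℝ) 1 :=
    ⟨hmem 6 (by norm_num), hmem 4 (by norm_num)⟩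
  have hy : ((t^2 : ℝ), (t^4 : ℝ)) ∈ Set.Ioo (0:ℝ) 1 ×ˢ Set.Ioo (0:ℝ) 1 :=
    ⟨hmem 2 (by norm_num), hmem 4 (by norm_num)⟩
  have hle := hcx.2 hx hy ha hb hab
  have hcomb : a • ((t^6 : ℝ), (t^4 : ℝ)) + b • ((t^2 : ℝ), (t^4 : ℝ)) = ((t^4 : ℝ), (t^4 : ℝ)) := by
    have h1 : a * t^6 + b * t^2 = t^4 := by
      rw [hadef, hbdef, div_mul_eq_mul_div, div_mul_eq_mul_div, ← add_div,
        div_eq_iff hden.ne']; ring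
    have h2 : a * t^4 + b * t^4 = t^4 := by
      rw [← add_mul, hab, one_mul]
    simp only [Prod.smul_mk, Prod.mk_add_mk, smul_eq_mul]
    rw [h1, h2]
  rw [hcomb, hfx, hfy, hfm] at hle
  simp only [smul_eq_mul] at hle
  -- derive the contradiction
  have hS : 0 < 1 + t - t^3 - 4*t^4 - 4*t^5 - t^6 + 2*t^7 + 4*t^8 + 4*t^9 + 2*t^10 :=
    auxS_stmt13 t hlb hub
  have hfac : (1 - t^4 - t^4 + 2*t^8) * (t^2 - t^6)
      - ((t^2 - t^4) * (1 - t^9 - t^4 + 2*t^13) + (t^4 - t^6) * (1 - t^1 - t^4 + 2*t^5))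
      = t^5 * (1-t)^2 * (1 + t - t^3 - 4*t^4 - 4*t^5 - t^6 + 2*t^7 + 4*t^8 + 4*t^9 + 2*t^10) := by
    ring
  have hpos : 0 < t^5 * (1-t)^2 * (1 + t - t^3 - 4*t^4 - 4*t^5 - t^6 + 2*t^7 + 4*t^8 + 4*t^9 + 2*t^10) := by
    apply mul_pos (mul_pos (pow_pos htpos 5) _) hS
    have : (0:ℝ) < 1 - t := by linarith
    positivity
  have hstrict : a * (1 - t^9 - t^4 + 2*t^13) + b * (1 - t^1 - t^4 + 2*t^5)
      < 1 - t^4 - t^4 + 2*t^8 := by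
    rw [hadef, hbdef, div_mul_eq_mul_div, div_mul_eq_mul_div, ← add_div,
      div_lt_iff₀ hden]
    linarith [hfac, hpos]
  linarith
end
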